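/- Sensitivity of stationary distributions: let $p_1, p_2$ be two Markov transition kernels on $\mathcal{S}$ with invariant distributions $\mu_1, \mu_2$, respectively. Suppose the chain with kernel $p_2$ is uniformly ergodic with constants $C > 0$, $\alpha \in (0,1)$. Then $\|\mu_1 - \mu_2\|_{TV} \leq \frac{m^\star}{1-\alpha} \int_{\mathcal{S}} \|p_1(s,\cdot) - p_2(s,\cdot)\|_{TV}\, d\mu_1(s)$, where $m^\star = \lceil \log_{1/\alpha}(C) \rceil + 1$. In particular, $\|\mu_1 - \mu_2\|_{TV} \leq \frac{m^\star}{1-\alpha}\,\sup_{s} \|p_1(s,\cdot) - p_2(s,\cdot)\|_{TV}$. -/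

import Mathlib

open MeasureTheory

/-- Total variation norm of the difference of two measures. -/
noncomputable def tvDist {S : Type*} [MeasurableSpace S] (μ ν : Measure S) : ℝ :=
  sSup {x : ℝ | ∃ (n : ℕ) (B : Fin n → Set S), (∀ i, MeasurableSet (B i)) ∧
    (Pairwise fun i j => Disjoint (B i) (B j)) ∧ (⋃ i, B i) = Set.univ ∧
    x = ∑ i, |(μ (B i)).toReal - (ν (B i)).toReal|}

/-- The `m`-step transition law of the Markov chain with one-step kernel `p`, started at `s`. -/
noncomputable def stepDist {S : Type*} [MeasurableSpace S] (p : S → Measure S) :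
    ℕ → S → Measure S
  | 0, s => Measure.dirac s
  | n + 1, s => (stepDist p n s).bind p

/-- The span of a real-valued function: `sup v - inf v`. -/
noncomputable def spanF {Z : Type*} (v : Z → ℝ) : ℝ :=
  sSup (Set.range v) - sInf (Set.range v)

/-!
Bounded test functions realise the total variation distance: each partition sum in `tvDist μ ν`
is `∫ g ∂μ - ∫ g ∂ν` for some `g` with `|g| ≤ 1`, and a Hahn decomposition gives
`∫ f ∂μ - ∫ f ∂ν ≤ c * tvDist μ ν` whenever `|f| ≤ c`. Write `μ P` for `μ.bind p` and `P₂ᵐ` for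
`stepDist p₂ m`, and fix such a `g`. Each step `μ₁ P₂ᵏ = μ₁ P₁ P₂ᵏ ↝ μ₁ P₂ P₂ᵏ` changes `∫ g` by at
most `D = ∫ tvDist (p₁ s) (p₂ s) ∂μ₁`, so `∫ g ∂μ₁ - ∫ g ∂(μ₁ P₂ᵐ) ≤ m D`. Since `μ₂ = μ₂ P₂ᵐ`
and `s ↦ ∫ g ∂(P₂ᵐ s)` stays within `C αᵐ` of `∫ g ∂μ₂`, the remaining difference is at most
`C αᵐ * tvDist μ₁ μ₂`. For `m = m⋆` we have `C αᵐ ≤ α`, and this `α`-fraction of `tvDist μ₁ μ₂` is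
absorbed into the left-hand side.
-/

open ProbabilityTheory

section TotalVariation

variable {S : Type*} [MeasurableSpace S] {μ ν : Measure S}

lemma integrable_of_abs_le [IsFiniteMeasure μ] {f : S → ℝ} (hf : Measurable f) {c : ℝ}
    (hc : ∀ s, |f s| ≤ c) : Integrable f μ :=
  .of_bound hf.aestronglyMeasurable c (.of_forall hc)

lemma abs_integral_le_of_abs_le [IsProbabilityMeasure μ] {g : S → ℝ} {c : ℝ}
    (hg : ∀ s, |g s| ≤ c) : |∫ s, g s ∂μ| ≤ c := by
  simpa using norm_integral_le_of_norm_le_const (μ := μ) (f := g) (.of_forall hg)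

lemma exists_integral_sub_eq_sum_abs_sub [IsFiniteMeasure μ] [IsFiniteMeasure ν] {n : ℕ}
    {B : Fin n → Set S} (hB : ∀ i, MeasurableSet (B i))
    (hdisj : Pairwise fun i j => Disjoint (B i) (B j)) :
    ∃ g : S → ℝ, Measurable g ∧ (∀ s, |g s| ≤ 1) ∧
      ∫ s, g s ∂μ - ∫ s, g s ∂ν = ∑ i, |(μ (B i)).toReal - (ν (B i)).toReal| := by
  set ε : Fin n → ℝ := fun i => SignType.sign ((μ (B i)).toReal - (ν (B i)).toReal)
  have hε : ∀ i, |ε i| ≤ 1 := fun i => by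
    simp only [ε]
    generalize SignType.sign ((μ (B i)).toReal - (ν (B i)).toReal) = t
    cases t <;> simp
  refine ⟨fun s => ∑ i, (B i).indicator (fun _ => ε i) s,
    Finset.measurable_sum _ fun i _ => measurable_const.indicator (hB i), fun s => ?_, ?_⟩
  · by_cases hs : ∃ j, s ∈ B j
    · obtain ⟨j, hj⟩ := hs
      dsimp only
      rw [Finset.sum_eq_single j (fun i _ hij => Set.indicator_of_notMem
        (Set.disjoint_left.1 (hdisj hij.symm) hj) _) (by simp), Set.indicator_of_mem hj]
      exact hε j
    · push Not at hs
      simp [Set.indicator_of_notMem (hs _)]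
  · rw [integral_finsetSum _ fun i _ => (integrable_const _).indicator (hB i),
      integral_finsetSum _ fun i _ => (integrable_const _).indicator (hB i),
      ← Finset.sum_sub_distrib]
    refine Finset.sum_congr rfl fun i _ => ?_
    simp only [integral_indicator_const _ (hB i), smul_eq_mul, measureReal_def, ε]
    rw [← sub_mul, self_mul_sign]

lemma sum_abs_sub_le_two [IsProbabilityMeasure μ] [IsProbabilityMeasure ν] {n : ℕ}
    {B : Fin n → Set S} (hB : ∀ i, MeasurableSet (B i))
    (hdisj : Pairwise fun i j => Disjoint (B i) (B j)) :
    ∑ i, |(μ (B i)).toReal - (ν (B i)).toReal| ≤ 2 := by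
  obtain ⟨g, -, hg, hsum⟩ := exists_integral_sub_eq_sum_abs_sub (μ := μ) (ν := ν) hB hdisj
  rw [← hsum]
  linarith [abs_le.1 (abs_integral_le_of_abs_le (μ := μ) hg),
    abs_le.1 (abs_integral_le_of_abs_le (μ := ν) hg)]

lemma sum_abs_sub_le_tvDist [IsProbabilityMeasure μ] [IsProbabilityMeasure ν] {n : ℕ}
    {B : Fin n → Set S} (hB : ∀ i, MeasurableSet (B i))
    (hdisj : Pairwise fun i j => Disjoint (B i) (B j)) (hcover : (⋃ i, B i) = Set.univ) :
    ∑ i, |(μ (B i)).toReal - (ν (B i)).toReal| ≤ tvDist μ ν :=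
  le_csSup ⟨2, by rintro _ ⟨n, B, hB, hdisj, -, rfl⟩; exact sum_abs_sub_le_two hB hdisj⟩
    ⟨n, B, hB, hdisj, hcover, rfl⟩

lemma tvDist_nonneg [IsProbabilityMeasure μ] [IsProbabilityMeasure ν] : 0 ≤ tvDist μ ν := by
  simpa using sum_abs_sub_le_tvDist (μ := μ) (ν := ν) (B := fun _ : Fin 1 => Set.univ)
    (fun _ => .univ) Subsingleton.pairwise (Set.iUnion_const _)

lemma tvDist_le_of_forall_integral_sub_le [IsProbabilityMeasure μ] [IsProbabilityMeasure ν]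
    {K : ℝ} (hK : ∀ g : S → ℝ, Measurable g → (∀ s, |g s| ≤ 1) →
      ∫ s, g s ∂μ - ∫ s, g s ∂ν ≤ K) :
    tvDist μ ν ≤ K := by
  refine csSup_le ⟨0, 1, fun _ => Set.univ, fun _ => .univ, Subsingleton.pairwise,
    Set.iUnion_const _, by simp⟩ ?_
  rintro _ ⟨n, B, hB, hdisj, -, rfl⟩
  obtain ⟨g, hgm, hg, hsum⟩ := exists_integral_sub_eq_sum_abs_sub (μ := μ) (ν := ν) hB hdisj
  exact hsum ▸ hK g hgm hg

lemma tvDist_le_two [IsProbabilityMeasure μ] [IsProbabilityMeasure ν] : tvDist μ ν ≤ 2 :=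
  tvDist_le_of_forall_integral_sub_le fun g _ hg => by
    linarith [abs_le.1 (abs_integral_le_of_abs_le (μ := μ) hg),
      abs_le.1 (abs_integral_le_of_abs_le (μ := ν) hg)]

lemma abs_sub_add_abs_sub_compl_le_tvDist [IsProbabilityMeasure μ] [IsProbabilityMeasure ν]
    {T : Set S} (hT : MeasurableSet T) :
    |μ.real T - ν.real T| + |μ.real Tᶜ - ν.real Tᶜ| ≤ tvDist μ ν := by
  have hdisj : Pairwise fun i j => Disjoint (![T, Tᶜ] i) (![T, Tᶜ] j) := by
    intro i j hij
    fin_cases i <;> fin_cases j <;> simp_all [disjoint_compl_right, disjoint_compl_left]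
  have hcover : (⋃ i, ![T, Tᶜ] i) = Set.univ := by
    ext s
    simp [Fin.exists_fin_two, em]
  simpa [Fin.sum_univ_two, measureReal_def] using
    sum_abs_sub_le_tvDist (μ := μ) (ν := ν) (fun i => by fin_cases i <;> simp [hT, hT.compl])
      hdisj hcover

lemma restrict_le_restrict_of_forall_subset {T : Set S} (hT : MeasurableSet T)
    (h : ∀ t, MeasurableSet t → t ⊆ T → ν t ≤ μ t) : ν.restrict T ≤ μ.restrict T :=
  Measure.le_iff.2 fun A hA => by
    rw [Measure.restrict_apply hA, Measure.restrict_apply hA]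
    exact h _ (hA.inter hT) Set.inter_subset_right

lemma abs_integral_sub_integral_le_of_le {ρ : Measure S} [IsFiniteMeasure ρ] (hνρ : ν ≤ ρ)
    {f : S → ℝ} (hf : Measurable f) {c : ℝ} (hc : ∀ s, |f s| ≤ c) :
    |∫ s, f s ∂ρ - ∫ s, f s ∂ν| ≤ c * (ρ.real Set.univ - ν.real Set.univ) := by
  have : IsFiniteMeasure ν := isFiniteMeasure_of_le ρ hνρ
  have : IsFiniteMeasure (ρ - ν) := isFiniteMeasure_of_le ρ Measure.sub_le
  have hsplit : ∫ s, f s ∂ρ = ∫ s, f s ∂(ρ - ν) + ∫ s, f s ∂ν := by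
    conv_lhs => rw [← Measure.sub_add_cancel_of_le hνρ]
    exact integral_add_measure (integrable_of_abs_le hf hc) (integrable_of_abs_le hf hc)
  have hmass : (ρ - ν).real Set.univ = ρ.real Set.univ - ν.real Set.univ := by
    rw [measureReal_def, Measure.sub_apply .univ hνρ,
      ENNReal.toReal_sub_of_le (hνρ _) (measure_ne_top ρ _), measureReal_def, measureReal_def]
  rw [hsplit, add_sub_cancel_right, ← hmass]
  exact norm_integral_le_of_norm_le_const (f := f) (.of_forall hc)

lemma integral_sub_integral_le_mul_tvDist [IsProbabilityMeasure μ] [IsProbabilityMeasure ν]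
    {f : S → ℝ} (hf : Measurable f) {c : ℝ} (hc : ∀ s, |f s| ≤ c) :
    ∫ s, f s ∂μ - ∫ s, f s ∂ν ≤ c * tvDist μ ν := by
  obtain ⟨T, hT, hνμ, hμν⟩ := hahn_decomposition μ ν
  -- `ρ = μ ⊔ ν` dominates both measures, and its excess mass over them is the `{T, Tᶜ}` sum
  set ρ := μ.restrict T + ν.restrict Tᶜ
  have hμρ : μ ≤ ρ := by
    conv_lhs => rw [← Measure.restrict_add_restrict_compl (μ := μ) hT]
    exact add_le_add le_rfl (restrict_le_restrict_of_forall_subset hT.compl hμν)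
  have hνρ : ν ≤ ρ := by
    conv_lhs => rw [← Measure.restrict_add_restrict_compl (μ := ν) hT]
    exact add_le_add (restrict_le_restrict_of_forall_subset hT hνμ) le_rfl
  have hρ : ρ.real Set.univ = μ.real T + ν.real Tᶜ := by
    simp [ρ, measureReal_def, ENNReal.toReal_add]
  have hνμT : ν.real T ≤ μ.real T :=
    ENNReal.toReal_mono (measure_ne_top μ T) (hνμ T hT subset_rfl)
  have hμνT : μ.real Tᶜ ≤ ν.real Tᶜ :=
    ENNReal.toReal_mono (measure_ne_top ν Tᶜ) (hμν Tᶜ hT.compl subset_rfl)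
  have htv := abs_sub_add_abs_sub_compl_le_tvDist (μ := μ) (ν := ν) hT
  rw [abs_of_nonneg (sub_nonneg.2 hνμT), abs_of_nonpos (sub_nonpos.2 hμνT)] at htv
  have hc0 : 0 ≤ c := (abs_nonneg _).trans (hc (nonempty_of_isProbabilityMeasure μ).some)
  calc ∫ s, f s ∂μ - ∫ s, f s ∂ν
      = (∫ s, f s ∂ρ - ∫ s, f s ∂ν) - (∫ s, f s ∂ρ - ∫ s, f s ∂μ) := by ring
    _ ≤ c * (ρ.real Set.univ - ν.real Set.univ) + c * (ρ.real Set.univ - μ.real Set.univ) :=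
        sub_le_sub (le_of_abs_le (abs_integral_sub_integral_le_of_le hνρ hf hc))
          (neg_le_of_abs_le (abs_integral_sub_integral_le_of_le hμρ hf hc)) |>.trans_eq
          (sub_neg_eq_add _ _)
    _ = c * ((μ.real T - ν.real T) + -(μ.real Tᶜ - ν.real Tᶜ)) := by
        rw [hρ, ← measureReal_add_measureReal_compl (μ := μ) hT,
          ← measureReal_add_measureReal_compl (μ := ν) hT]
        ring
    _ ≤ c * tvDist μ ν := mul_le_mul_of_nonneg_left htv hc0

lemma abs_integral_sub_integral_le_mul_tvDist [IsProbabilityMeasure μ] [IsProbabilityMeasure ν]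
    {f : S → ℝ} (hf : Measurable f) {c : ℝ} (hc : ∀ s, |f s| ≤ c) :
    |∫ s, f s ∂μ - ∫ s, f s ∂ν| ≤ c * tvDist μ ν := by
  have hneg := integral_sub_integral_le_mul_tvDist (μ := μ) (ν := ν) hf.neg
    (c := c) (by simpa using hc)
  rw [Pi.neg_def, integral_neg, integral_neg] at hneg
  exact abs_le.2 ⟨by linarith, integral_sub_integral_le_mul_tvDist hf hc⟩

end TotalVariation

section Bind

variable {α β : Type*} [MeasurableSpace α] [MeasurableSpace β]

lemma Measurable.integral_measure {κ : α → Measure β} (hκ : Measurable κ) {f : β → ℝ}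
    (hf : Measurable f) : Measurable fun x => ∫ y, f y ∂(κ x) :=
  (hf.stronglyMeasurable.integral_kernel (κ := ⟨κ, hκ⟩)).measurable

lemma integral_bind {κ : α → Measure β} (hκ : Measurable κ) (μ : Measure α) {f : β → ℝ}
    (hf : Integrable f (μ.bind κ)) :
    ∫ y, f y ∂(μ.bind κ) = ∫ x, ∫ y, f y ∂(κ x) ∂μ := by
  have h : μ.bind κ = (⟨κ, hκ⟩ ∘ₖ Kernel.const Unit μ) () :=
    Measure.comp_eq_comp_const_apply (κ := ⟨κ, hκ⟩)
  rw [h] at hf ⊢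
  exact Kernel.integral_comp hf

lemma integral_bind_of_abs_le {κ : α → Measure β} (hκ : Measurable κ)
    (hκp : ∀ x, IsProbabilityMeasure (κ x)) (μ : Measure α) [IsProbabilityMeasure μ]
    {f : β → ℝ} (hf : Measurable f) {c : ℝ} (hc : ∀ y, |f y| ≤ c) :
    ∫ y, f y ∂(μ.bind κ) = ∫ x, ∫ y, f y ∂(κ x) ∂μ :=
  have : IsProbabilityMeasure (μ.bind κ) :=
    isProbabilityMeasure_bind hκ.aemeasurable (.of_forall hκp)
  integral_bind hκ μ (integrable_of_abs_le hf hc)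

lemma integral_bind_sub_integral_bind_le {p q : α → Measure β} (hp : Measurable p)
    (hq : Measurable q) (hpp : ∀ x, IsProbabilityMeasure (p x))
    (hqp : ∀ x, IsProbabilityMeasure (q x)) (hpq : Measurable fun x => tvDist (p x) (q x))
    (μ : Measure α) [IsProbabilityMeasure μ] {f : β → ℝ} (hf : Measurable f) {c : ℝ}
    (hc : ∀ y, |f y| ≤ c) :
    ∫ y, f y ∂(μ.bind p) - ∫ y, f y ∂(μ.bind q) ≤ c * ∫ x, tvDist (p x) (q x) ∂μ := by
  have hint : ∀ r : α → Measure β, Measurable r → (∀ x, IsProbabilityMeasure (r x)) →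
      Integrable (fun x => ∫ y, f y ∂(r x)) μ := fun r hr hrp =>
    integrable_of_abs_le (hr.integral_measure hf) fun x => abs_integral_le_of_abs_le (μ := r x) hc
  rw [integral_bind_of_abs_le hp hpp μ hf hc, integral_bind_of_abs_le hq hqp μ hf hc,
    ← integral_sub (hint p hp hpp) (hint q hq hqp), ← integral_const_mul]
  refine integral_mono ((hint p hp hpp).sub (hint q hq hqp)) ?_ fun x => ?_
  · refine (integrable_of_abs_le hpq (c := 2) fun x => ?_).const_mul c
    rw [abs_of_nonneg tvDist_nonneg]
    exact tvDist_le_two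
  · exact integral_sub_integral_le_mul_tvDist hf hc

lemma integral_bind_sub_integral_bind_le_mul_tvDist {κ : α → Measure β} (hκ : Measurable κ)
    {ν : Measure β} [IsProbabilityMeasure ν] {ε : ℝ} (hε : ∀ x, tvDist (κ x) ν ≤ ε)
    (hκp : ∀ x, IsProbabilityMeasure (κ x)) (μ μ' : Measure α) [IsProbabilityMeasure μ]
    [IsProbabilityMeasure μ'] {f : β → ℝ} (hf : Measurable f) {c : ℝ}
    (hc : ∀ y, |f y| ≤ c) :
    ∫ y, f y ∂(μ.bind κ) - ∫ y, f y ∂(μ'.bind κ) ≤ c * ε * tvDist μ μ' := by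
  have hc0 : 0 ≤ c := (abs_nonneg _).trans (hc (nonempty_of_isProbabilityMeasure ν).some)
  set h : α → ℝ := fun x => ∫ y, f y ∂(κ x) - ∫ y, f y ∂ν
  have hh : Measurable h := (hκ.integral_measure hf).sub_const _
  have hh_le : ∀ x, |h x| ≤ c * ε := fun x =>
    (abs_integral_sub_integral_le_mul_tvDist hf hc).trans (mul_le_mul_of_nonneg_left (hε x) hc0)
  have hshift : ∀ ξ : Measure α, IsProbabilityMeasure ξ →
      ∫ y, f y ∂(ξ.bind κ) = ∫ x, h x ∂ξ + ∫ y, f y ∂ν := fun ξ _ => by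
    rw [integral_bind_of_abs_le hκ hκp ξ hf hc, integral_sub
      (integrable_of_abs_le (hκ.integral_measure hf) fun x => abs_integral_le_of_abs_le hc)
      (integrable_const _), integral_const, probReal_univ, one_smul, sub_add_cancel]
  rw [hshift μ inferInstance, hshift μ' inferInstance, add_sub_add_right_eq_sub]
  exact integral_sub_integral_le_mul_tvDist hh hh_le

end Bind

section MarkovChain

variable {S : Type*} [MeasurableSpace S] {p q : S → Measure S}

lemma measurable_stepDist (hp : Measurable p) (n : ℕ) : Measurable (stepDist p n) := by
  induction n with
  | zero => exact Measure.measurable_dirac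
  | succ n ih => exact (Measure.measurable_bind' hp).comp ih

lemma isProbabilityMeasure_stepDist (hp : Measurable p) (hpp : ∀ s, IsProbabilityMeasure (p s))
    (n : ℕ) (s : S) : IsProbabilityMeasure (stepDist p n s) := by
  induction n with
  | zero => exact Measure.dirac.isProbabilityMeasure
  | succ n ih => exact isProbabilityMeasure_bind hp.aemeasurable (.of_forall hpp)

lemma bind_stepDist_zero (μ : Measure S) : μ.bind (stepDist p 0) = μ :=
  Measure.bind_dirac

lemma bind_stepDist_succ (hp : Measurable p) (μ : Measure S) (n : ℕ) :
    μ.bind (stepDist p (n + 1)) = (μ.bind p).bind (stepDist p n) := by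
  induction n generalizing μ with
  | zero =>
    rw [bind_stepDist_zero]
    exact congrArg μ.bind (funext fun s => Measure.dirac_bind hp s)
  | succ n ih =>
    calc μ.bind (stepDist p (n + 2)) = (μ.bind (stepDist p (n + 1))).bind p :=
          (Measure.bind_bind (measurable_stepDist hp _).aemeasurable hp.aemeasurable).symm
      _ = ((μ.bind p).bind (stepDist p n)).bind p := by rw [ih]
      _ = (μ.bind p).bind (stepDist p (n + 1)) :=
          Measure.bind_bind (measurable_stepDist hp _).aemeasurable hp.aemeasurable

lemma bind_stepDist_of_bind_eq (hp : Measurable p) {μ : Measure S} (hμ : μ.bind p = μ)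
    (n : ℕ) : μ.bind (stepDist p n) = μ := by
  induction n with
  | zero => exact bind_stepDist_zero μ
  | succ n ih => rw [bind_stepDist_succ hp, hμ, ih]

lemma integral_sub_integral_bind_stepDist_le (hp : Measurable p) (hq : Measurable q)
    (hpp : ∀ s, IsProbabilityMeasure (p s)) (hqp : ∀ s, IsProbabilityMeasure (q s))
    (hpq : Measurable fun s => tvDist (p s) (q s)) {μ : Measure S} [IsProbabilityMeasure μ]
    (hμ : μ.bind p = μ) {f : S → ℝ} (hf : Measurable f) {c : ℝ} (hc : ∀ s, |f s| ≤ c)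
    (m : ℕ) :
    ∫ s, f s ∂μ - ∫ s, f s ∂(μ.bind (stepDist q m)) ≤
      m * (c * ∫ s, tvDist (p s) (q s) ∂μ) := by
  induction m with
  | zero => simp [bind_stepDist_zero]
  | succ m ih =>
    have hqm := measurable_stepDist hq m
    have hqmp := isProbabilityMeasure_stepDist hq hqp m
    have : IsProbabilityMeasure (μ.bind q) :=
      isProbabilityMeasure_bind hq.aemeasurable (.of_forall hqp)
    have hm : ∫ s, f s ∂(μ.bind (stepDist q m)) =
        ∫ s, ∫ t, f t ∂(stepDist q m s) ∂(μ.bind p) := by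
      rw [hμ, integral_bind_of_abs_le hqm hqmp μ hf hc]
    have hm_succ : ∫ s, f s ∂(μ.bind (stepDist q (m + 1))) =
        ∫ s, ∫ t, f t ∂(stepDist q m s) ∂(μ.bind q) := by
      rw [bind_stepDist_succ hq, integral_bind_of_abs_le hqm hqmp _ hf hc]
    have hstep := integral_bind_sub_integral_bind_le hp hq hpp hqp hpq μ
      (hqm.integral_measure hf) fun s => abs_integral_le_of_abs_le (μ := stepDist q m s) hc
    push_cast
    linarith

lemma tvDist_le_of_tvDist_stepDist_le (hp : Measurable p) (hq : Measurable q)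
    (hpp : ∀ s, IsProbabilityMeasure (p s)) (hqp : ∀ s, IsProbabilityMeasure (q s))
    (hpq : Measurable fun s => tvDist (p s) (q s)) {μ ν : Measure S} [IsProbabilityMeasure μ]
    [IsProbabilityMeasure ν] (hμ : μ.bind p = μ) (hν : ν.bind q = ν) {m : ℕ} {ε : ℝ}
    (hε : ∀ s, tvDist (stepDist q m s) ν ≤ ε) :
    tvDist μ ν ≤ m * ∫ s, tvDist (p s) (q s) ∂μ + ε * tvDist μ ν := by
  refine tvDist_le_of_forall_integral_sub_le fun g hg hg_le => ?_
  have hμm := integral_sub_integral_bind_stepDist_le hp hq hpp hqp hpq hμ hg hg_le m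
  have hmν := integral_bind_sub_integral_bind_le_mul_tvDist (measurable_stepDist hq m) hε
    (isProbabilityMeasure_stepDist hq hqp m) μ ν hg hg_le
  rw [bind_stepDist_of_bind_eq hq hν] at hmν
  rw [one_mul] at hμm hmν
  linarith

end MarkovChain

lemma mul_pow_ceil_logb_succ_le {C α : ℝ} (hC : 0 < C) (hα : α ∈ Set.Ioo (0 : ℝ) 1) :
    C * α ^ (⌈Real.logb (1 / α) C⌉₊ + 1) ≤ α := by
  obtain ⟨hα0, hα1⟩ := hα
  set N := ⌈Real.logb (1 / α) C⌉₊
  have hCN : C ≤ 1 / α ^ N := by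
    rw [← one_div_pow, ← Real.rpow_natCast,
      ← Real.logb_le_iff_le_rpow (one_lt_one_div hα0 hα1) hC]
    exact Nat.le_ceil _
  calc C * α ^ (N + 1) = C * α ^ N * α := by ring
    _ ≤ 1 * α := by gcongr; exact (le_div_iff₀ (pow_pos hα0 N)).1 hCN
    _ = α := one_mul α

theorem stmt9 {S : Type*} [MeasurableSpace S] (p1 p2 : S → Measure S)
    (hp1 : ∀ s, IsProbabilityMeasure (p1 s)) (hp2 : ∀ s, IsProbabilityMeasure (p2 s))
    (hm1 : Measurable p1) (hm2 : Measurable p2)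
    (μ1 μ2 : Measure S) [IsProbabilityMeasure μ1] [IsProbabilityMeasure μ2]
    (hinv1 : μ1.bind p1 = μ1) (hinv2 : μ2.bind p2 = μ2)
    (C α : ℝ) (hC : 0 < C) (hα : α ∈ Set.Ioo (0 : ℝ) 1)
    (herg2 : ∀ s t, tvDist (stepDist p2 t s) μ2 ≤ C * α ^ t)
    (hmeas : Measurable fun s => tvDist (p1 s) (p2 s)) :
    tvDist μ1 μ2 ≤ ((⌈Real.logb (1 / α) C⌉₊ + 1 : ℕ) : ℝ) / (1 - α) *
        ∫ s, tvDist (p1 s) (p2 s) ∂μ1 ∧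
      ∀ c : ℝ, (∀ s, tvDist (p1 s) (p2 s) ≤ c) →
        tvDist μ1 μ2 ≤ ((⌈Real.logb (1 / α) C⌉₊ + 1 : ℕ) : ℝ) / (1 - α) * c := by
  set m := ⌈Real.logb (1 / α) C⌉₊ + 1
  have hα1 : 0 < 1 - α := sub_pos.2 hα.2
  have hperturb := tvDist_le_of_tvDist_stepDist_le hm1 hm2 hp1 hp2 hmeas hinv1 hinv2
    (m := m) fun s => herg2 s m
  have hcontract : C * α ^ m * tvDist μ1 μ2 ≤ α * tvDist μ1 μ2 :=
    mul_le_mul_of_nonneg_right (mul_pow_ceil_logb_succ_le hC hα) tvDist_nonneg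
  have hmain : tvDist μ1 μ2 ≤ (m : ℝ) / (1 - α) * ∫ s, tvDist (p1 s) (p2 s) ∂μ1 := by
    rw [div_mul_eq_mul_div, le_div_iff₀ hα1]
    linarith
  refine ⟨hmain, fun c hc => hmain.trans (mul_le_mul_of_nonneg_left ?_ (by positivity))⟩
  simpa using integral_mono_of_nonneg (μ := μ1) (.of_forall fun s => tvDist_nonneg)
    (integrable_const c) (.of_forall hc)
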